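/- Let l ≥ 1 and let ψ = (ψ_0,…,ψ_{l-1}) be a tuple of polynomials in k[x_1,…,x_r]. Then for every 0 ≤ a ≤ l−1, one has the identity a! · C(2l−1,a)^{−1} · f_{a,r,l,F_ψ} = ((2l−1)!/(2l−1−a)!) · g_{1,r+1}^{2l−1} + ∑_{i=a}^{l−1} (1/(i−a)!) · ψ̃_i · g_{1,r+1}^{i} in k[{g_{ij}}_{1≤i<j≤r+1}], where ψ̃_i = ψ_i(1, g_{12},…,g_{1r}) and C(2l−1,a)^{−1} is the reciprocal of the binomial coefficient in k. -/

import Mathlib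

open MvPolynomial Finset

/-- Index type for the strictly upper-triangular entries `g_{ij}`, `1 ≤ i < j ≤ r+1`. -/
abbrev UTIdx (r : ℕ) := {p : Fin (r + 1) × Fin (r + 1) // p.1 < p.2}

/-- The coordinate ring `k[{g_{ij}}_{1 ≤ i < j ≤ r+1}]` of the unipotent
upper-triangular group `U_{r+1}`. -/
abbrev URing (k : Type) [CommSemiring k] (r : ℕ) := MvPolynomial (UTIdx r) k

/-- The generic unipotent upper-triangular matrix: indeterminate entries `g_{ij}` for `i < j`,
`1` on the diagonal, `0` below the diagonal. -/
noncomputable def genMat (k : Type) [CommRing k] (r : ℕ) :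
    Matrix (Fin (r + 1)) (Fin (r + 1)) (URing k r) :=
  Matrix.of fun i j => if h : i < j then X ⟨(i, j), h⟩ else if i = j then 1 else 0

/-- Action of a matrix on polynomials via `g · xᵢ = ∑ⱼ gⱼᵢ xⱼ`. -/
noncomputable def glAct {R : Type*} [CommSemiring R] {n : ℕ}
    (g : Matrix (Fin n) (Fin n) R) (p : MvPolynomial (Fin n) R) : MvPolynomial (Fin n) R :=
  aeval (fun i => ∑ j, MvPolynomial.C (g j i) * X j) p

/-- A polynomial in `k[x₁,…,xᵣ]`, viewed in `(URing k r)[x₁,…,x_{r+1}]`. -/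
noncomputable def emb (k : Type) [CommRing k] (r : ℕ) (p : MvPolynomial (Fin r) k) :
    MvPolynomial (Fin (r + 1)) (URing k r) :=
  MvPolynomial.map (algebraMap k (URing k r)) (rename Fin.castSucc p)

/-- The first wedge factor `∑_{i=0}^{2l-1} x_{r+1}^i x₁^{2l-i} F_i` of `v_d^r(F)`. -/
noncomputable def vP (k : Type) [CommRing k] (r l : ℕ) (F : ℕ → MvPolynomial (Fin r) k) :
    MvPolynomial (Fin (r + 1)) (URing k r) :=
  ∑ i ∈ range (2 * l), X (Fin.last r) ^ i * X 0 ^ (2 * l - i) * emb k r (F i)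

/-- The second wedge factor `∑_{i=0}^{2l-1} x_{r+1}^{i+1} x₁^{2l-i-1} F_i` of `v_d^r(F)`. -/
noncomputable def vQ (k : Type) [CommRing k] (r l : ℕ) (F : ℕ → MvPolynomial (Fin r) k) :
    MvPolynomial (Fin (r + 1)) (URing k r) :=
  ∑ i ∈ range (2 * l), X (Fin.last r) ^ (i + 1) * X 0 ^ (2 * l - i - 1) * emb k r (F i)

/-- The monomial `x₁^{2l+d-a} x_{r+1}^{a}`. -/
noncomputable def mUp (r l d a : ℕ) : Fin (r + 1) →₀ ℕ :=
  Finsupp.single 0 (2 * l + d - a) + Finsupp.single (Fin.last r) a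

/-- The monomial `x₁^{d+a} x_{r+1}^{2l-a}`. -/
noncomputable def mDown (r l d a : ℕ) : Fin (r + 1) →₀ ℕ :=
  Finsupp.single 0 (d + a) + Finsupp.single (Fin.last r) (2 * l - a)

/-- `θ((g·v_d^r(F))_{x₁^{2l+d-a}x_{r+1}^a ∧ x₁^{d+a}x_{r+1}^{2l-a}})`: the coordinate of the
transform of `v_d^r(F)` by the generic unipotent upper-triangular matrix at the indicated
basis element of the exterior square, a polynomial in the variables `g_{ij}`. -/
noncomputable def thetaCoord (k : Type) [CommRing k] (r l d : ℕ)
    (F : ℕ → MvPolynomial (Fin r) k) (a : ℕ) : URing k r :=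
  coeff (mUp r l d a) (glAct (genMat k r) (vP k r l F)) *
      coeff (mDown r l d a) (glAct (genMat k r) (vQ k r l F)) -
    coeff (mDown r l d a) (glAct (genMat k r) (vP k r l F)) *
      coeff (mUp r l d a) (glAct (genMat k r) (vQ k r l F))

/-- The variable `g_{1,r+1}`. -/
noncomputable def gTop (k : Type) [CommRing k] (r : ℕ) : URing k r :=
  genMat k r 0 (Fin.last r)

/-- `p̃ = p(1, g_{12}, …, g_{1r})`. -/
noncomputable def tilde (k : Type) [CommRing k] (r : ℕ) (p : MvPolynomial (Fin r) k) :
    URing k r :=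
  aeval (fun j : Fin r => genMat k r 0 (Fin.castSucc j)) p

/-- The polynomial `f_{a,r,l,F} ∈ k[{g_{ij}}]`.  (Summands whose exponent of `g_{1,r+1}`
would be negative carry a vanishing binomial coefficient, so truncated subtraction in the
exponent gives the same element.) -/
noncomputable def fA (k : Type) [CommRing k] (r l : ℕ)
    (F : ℕ → MvPolynomial (Fin r) k) (a : ℕ) : URing k r :=
  (∑ i ∈ range (2 * l), ∑ j ∈ range (2 * l),
      if i < j then
        tilde k r (F i) * tilde k r (F j) * gTop k r ^ (i + j + 1 - 2 * l) *
          ((i.choose a * j.choose (2 * l - a - 1) +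
              i.choose (2 * l - a - 1) * j.choose a : ℕ) : URing k r)
      else 0) +
    ∑ i ∈ range (2 * l),
      tilde k r (F i) ^ 2 * gTop k r ^ (2 * i + 1 - 2 * l) *
        ((i.choose a * i.choose (2 * l - a - 1) : ℕ) : URing k r)

/-- The tuple `F_ψ`: `(F_ψ)_i = ψ_i/i!` for `0 ≤ i ≤ l−1`, `(F_ψ)_i = 0` for
`l ≤ i ≤ 2l−2`, and `(F_ψ)_{2l−1} = 1`. -/
noncomputable def Fpsi (k : Type) [Field k] (r l : ℕ) (ψ : ℕ → MvPolynomial (Fin r) k) :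
    ℕ → MvPolynomial (Fin r) k :=
  fun i => if i < l then ((i.factorial : k)⁻¹) • ψ i else if i = 2 * l - 1 then 1 else 0

/-- The polynomial `π_j^ψ ∈ k[{g_{ij}}]`. -/
noncomputable def piPsi (k : Type) [Field k] (r l : ℕ)
    (ψ : ℕ → MvPolynomial (Fin r) k) (j : ℕ) : URing k r :=
  MvPolynomial.C ((((2 * l - 1).factorial : k) / ((2 * l - 1 - j).factorial : k)) *
      ∑ a ∈ range (l - j), ((2 * l - 1 - j).choose a : k) * (-1 : k) ^ a) *
      gTop k r ^ (2 * l - 1) +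
    tilde k r (ψ j) * gTop k r ^ j


/-
Only the terms of `f_{a,r,l,F_ψ}` containing `F̃_{2l-1} = 1` survive: a summand with both
indices below `l` carries a factor `C(i, 2l-a-1)` with `i < l ≤ 2l-a-1`, and every other index
selects a vanishing `F̃_i`. What remains is
`C(2l-1,a)² g^{2l-1} + ∑_{i<l} C(2l-1,a) C(i,a) ψ̃_i/i! · g^i`,
and `a! C(i,a)/i! = 1/(i-a)!` finishes the computation.
-/

section Sums

variable {R : Type*} [CommSemiring R] (t : ℕ → R) (g : R) {l a : ℕ}

theorem choose_two_mul_sub_one_symm (ha : a < l) :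
    (2 * l - 1).choose (2 * l - a - 1) = (2 * l - 1).choose a := by
  rw [show 2 * l - a - 1 = 2 * l - 1 - a by omega, Nat.choose_symm (by omega)]

theorem sum_offDiag_eq (ha : a < l) (ht : ∀ i, l ≤ i → i < 2 * l - 1 → t i = 0) :
    (∑ i ∈ range (2 * l), ∑ j ∈ range (2 * l),
      if i < j then
        t i * t j * g ^ (i + j + 1 - 2 * l) *
          ((i.choose a * j.choose (2 * l - a - 1) +
            i.choose (2 * l - a - 1) * j.choose a : ℕ) : R)
      else 0) =
    ∑ i ∈ range l,
      t i * t (2 * l - 1) * g ^ i * ((i.choose a * (2 * l - 1).choose a : ℕ) : R) := by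
  have hlow : ∀ i < l, i.choose (2 * l - a - 1) = 0 := fun i hi =>
    Nat.choose_eq_zero_of_lt (by omega)
  calc _ = ∑ i ∈ range (2 * l), if i < l then
          t i * t (2 * l - 1) * g ^ i * ((i.choose a * (2 * l - 1).choose a : ℕ) : R) else 0 := by
        refine sum_congr rfl fun i hi => ?_
        rw [mem_range] at hi
        rw [sum_eq_single_of_mem (2 * l - 1) (by rw [mem_range]; omega)]
        · by_cases hil : i < l
          · rw [if_pos (by omega), if_pos hil, hlow i hil, choose_two_mul_sub_one_symm ha,
              show i + (2 * l - 1) + 1 - 2 * l = i by omega]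
            simp
          · rw [if_neg hil]
            split_ifs with hiN
            · rw [ht i (by omega) hiN, zero_mul, zero_mul, zero_mul]
            · rfl
        · intro j hj hjN
          rw [mem_range] at hj
          split_ifs with hij
          · by_cases hjl : j < l
            · rw [hlow j hjl, hlow i (by omega)]
              simp
            · rw [ht j (by omega) (by omega), mul_zero, zero_mul, zero_mul]
          · rfl
    _ = _ := by
        rw [← sum_subset (range_subset_range.2 (by omega : l ≤ 2 * l))]
        · exact sum_congr rfl fun i hi => if_pos (mem_range.1 hi)
        · intro i _ hi
          rw [if_neg (by simpa using hi)]

theorem sum_diag_eq (ha : a < l) (ht : ∀ i, l ≤ i → i < 2 * l - 1 → t i = 0) :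
    ∑ i ∈ range (2 * l), t i ^ 2 * g ^ (2 * i + 1 - 2 * l) *
        ((i.choose a * i.choose (2 * l - a - 1) : ℕ) : R) =
      t (2 * l - 1) ^ 2 * g ^ (2 * l - 1) *
        (((2 * l - 1).choose a * (2 * l - 1).choose a : ℕ) : R) := by
  rw [sum_eq_single_of_mem (2 * l - 1) (by rw [mem_range]; omega)]
  · rw [choose_two_mul_sub_one_symm ha, show 2 * (2 * l - 1) + 1 - 2 * l = 2 * l - 1 by omega]
  · intro i hi hiN
    rw [mem_range] at hi
    by_cases hil : i < l
    · rw [Nat.choose_eq_zero_of_lt (show i < 2 * l - a - 1 by omega)]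
      simp
    · rw [ht i (by omega) (by omega)]
      simp

end Sums

section Fpsi

variable {k : Type} [Field k] {r l : ℕ} (ψ : ℕ → MvPolynomial (Fin r) k)

theorem tilde_Fpsi_of_lt {i : ℕ} (hi : i < l) :
    tilde k r (Fpsi k r l ψ i) = C ((i.factorial : k)⁻¹) * tilde k r (ψ i) := by
  simp [Fpsi, hi, tilde, Algebra.smul_def, algebraMap_eq]

theorem tilde_Fpsi_of_le_of_lt {i : ℕ} (h₁ : l ≤ i) (h₂ : i < 2 * l - 1) :
    tilde k r (Fpsi k r l ψ i) = 0 := by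
  simp [Fpsi, show ¬i < l by omega, h₂.ne, tilde]

theorem tilde_Fpsi_top (hl : 1 ≤ l) : tilde k r (Fpsi k r l ψ (2 * l - 1)) = 1 := by
  simp [Fpsi, show ¬2 * l - 1 < l by omega, tilde]

theorem fA_Fpsi {a : ℕ} (ha : a < l) :
    fA k r l (Fpsi k r l ψ) a =
      C (((2 * l - 1).choose a : k)) *
        (C (((2 * l - 1).choose a : k)) * gTop k r ^ (2 * l - 1) +
          ∑ i ∈ range l,
            C ((i.choose a : k) * (i.factorial : k)⁻¹) * tilde k r (ψ i) * gTop k r ^ i) := by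
  have hzero : ∀ i, l ≤ i → i < 2 * l - 1 → tilde k r (Fpsi k r l ψ i) = 0 :=
    fun _ => tilde_Fpsi_of_le_of_lt ψ
  rw [fA, sum_offDiag_eq _ _ ha hzero, sum_diag_eq _ _ ha hzero, tilde_Fpsi_top ψ (by omega),
    mul_add, mul_sum, add_comm]
  congr 1
  · simp only [← map_natCast (C : k →+* URing k r), Nat.cast_mul, C_mul]
    ring
  · refine sum_congr rfl fun i hi => ?_
    rw [tilde_Fpsi_of_lt ψ (mem_range.1 hi)]
    simp only [← map_natCast (C : k →+* URing k r), Nat.cast_mul, C_mul]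
    ring

end Fpsi

section Factorials

variable {K : Type*} [Field K] [CharZero K]

theorem factorial_mul_choose_eq_div {n m : ℕ} (h : m ≤ n) :
    (m.factorial : K) * (n.choose m : K) = (n.factorial : K) / ((n - m).factorial : K) := by
  have := (Nat.cast_ne_zero (R := K)).2 m.factorial_ne_zero
  have := (Nat.cast_ne_zero (R := K)).2 n.factorial_ne_zero
  rw [Nat.cast_choose K h]
  field_simp

theorem factorial_mul_choose_mul_inv_factorial {n m : ℕ} (h : m ≤ n) :
    (m.factorial : K) * ((n.choose m : K) * (n.factorial : K)⁻¹) =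
      ((n - m).factorial : K)⁻¹ := by
  have := (Nat.cast_ne_zero (R := K)).2 m.factorial_ne_zero
  have := (Nat.cast_ne_zero (R := K)).2 n.factorial_ne_zero
  rw [Nat.cast_choose K h]
  field_simp

end Factorials

/-- **Lemma 3.4, proof identity.** For `0 ≤ a ≤ l−1`:
`a!·C(2l−1,a)⁻¹·f_{a,r,l,F_ψ} = ((2l−1)!/(2l−1−a)!)·g_{1,r+1}^{2l−1} + ∑_{i=a}^{l−1} (1/(i−a)!)·ψ̃ᵢ·g_{1,r+1}^i`. -/
theorem stmt4 {k : Type} [Field k] [CharZero k] (r l : ℕ) (hl : 1 ≤ l)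
    (ψ : ℕ → MvPolynomial (Fin r) k) (a : ℕ) (ha : a ≤ l - 1) :
    MvPolynomial.C ((a.factorial : k) * (((2 * l - 1).choose a : k))⁻¹) *
        fA k r l (Fpsi k r l ψ) a
      = MvPolynomial.C (((2 * l - 1).factorial : k) / ((2 * l - 1 - a).factorial : k)) *
          gTop k r ^ (2 * l - 1) +
        ∑ i ∈ Finset.Icc a (l - 1),
          MvPolynomial.C (((i - a).factorial : k)⁻¹) * tilde k r (ψ i) * gTop k r ^ i := by
  have hchoose : ((2 * l - 1).choose a : k) ≠ 0 :=
    Nat.cast_ne_zero.2 (Nat.choose_pos (by omega)).ne'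
  rw [fA_Fpsi ψ (by omega), ← mul_assoc, ← C_mul, inv_mul_cancel_right₀ hchoose, mul_add,
    ← mul_assoc, ← C_mul, factorial_mul_choose_eq_div (by omega), mul_sum]
  congr 1
  refine (sum_subset (fun i hi => mem_range.2 (by grind)) fun i _ hi => ?_).symm.trans
    (sum_congr rfl fun i hi => ?_)
  · rw [Nat.choose_eq_zero_of_lt (by grind)]
    simp
  · rw [← mul_assoc, ← mul_assoc, ← C_mul,
      factorial_mul_choose_mul_inv_factorial (mem_Icc.1 hi).1]
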